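/- For every real p ≤ 1 and every constant K₀ > 0, the function y ↦ G₁(p,y) is strictly decreasing on (0, +∞). Consequently, for every constant c > 0, the function y ↦ (1 − c·y²)·G₁(p,y) is strictly decreasing on (0, 1/√c) and is negative on (1/√c, +∞). -/
import Mathlib


open Real MeasureTheory Filter Set

/-- `g p y = ∫₀^y exp(−r² + p·r·y) dr`. -/
noncomputable def g (p y : ℝ) : ℝ := ∫ r in (0:ℝ)..y, Real.exp (-r^2 + p*r*y)

/-- Complementary error function `erfc z = (2/√π)∫_z^∞ exp(−r²) dr`. -/
noncomputable def erfc (z : ℝ) : ℝ := (2 / Real.sqrt π) * ∫ r in Set.Ioi z, Real.exp (-r^2)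

/-- `G₁(p,y) = exp((p−1)y²)/(K₀ + g(p,y))`. -/
noncomputable def G₁ (K₀ p y : ℝ) : ℝ := Real.exp ((p-1)*y^2) / (K₀ + g p y)

/-- `G₂(y) = exp(−γ₀²y²)/erfc(γ₀y)`. -/
noncomputable def G₂ (γ₀ y : ℝ) : ℝ := Real.exp (-(γ₀^2*y^2)) / erfc (γ₀*y)

/-- `G(M,p,y) = δ₁(1 − (A·M/B)y²)G₁(p,y) − δ₂(1 + M·y²)G₂(y)`. -/
noncomputable def Gfun (A B δ₁ δ₂ K₀ γ₀ M p y : ℝ) : ℝ :=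
  δ₁ * (1 - A*M/B * y^2) * G₁ K₀ p y - δ₂ * (1 + M*y^2) * G₂ γ₀ y

lemma g_nonneg (p : ℝ) {y : ℝ} (hy : 0 ≤ y) : 0 ≤ g p y :=
  intervalIntegral.integral_nonneg hy (fun r _ => (Real.exp_pos _).le)

noncomputable def Ffun (K₀ p y : ℝ) : ℝ := Real.exp ((1-p)*y^2) * (K₀ + g p y)

lemma Ffun_pos (K₀ p : ℝ) (hK₀ : 0 < K₀) {y : ℝ} (hy : 0 ≤ y) : 0 < Ffun K₀ p y :=
  mul_pos (Real.exp_pos _) (by linarith [g_nonneg p hy])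

lemma G₁_eq (K₀ p y : ℝ) : G₁ K₀ p y = 1 / Ffun K₀ p y := by
  rw [G₁, Ffun, one_div, mul_inv, ← Real.exp_neg, div_eq_mul_inv]
  ring_nf

lemma Ffun_eq (K₀ p : ℝ) {y : ℝ} (hy : 0 < y) :
    Ffun K₀ p y = K₀ * Real.exp ((1-p)*y^2)
      + y * ∫ s in (0:ℝ)..1, Real.exp (y^2 * ((1-s)*(1+s-p))) := by
  have hsub : g p y = y * ∫ s in (0:ℝ)..1, Real.exp (-(y*s)^2 + p*(y*s)*y) := by
    have h := intervalIntegral.smul_integral_comp_mul_left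
      (f := fun r => Real.exp (-r^2 + p*r*y)) (a := (0:ℝ)) (b := 1) y
    simp only [mul_zero, mul_one, smul_eq_mul] at h
    rw [g, ← h]
  rw [Ffun, hsub, mul_add]
  congr 1
  · ring
  · rw [show Real.exp ((1-p)*y^2) * (y * ∫ s in (0:ℝ)..1, Real.exp (-(y*s)^2 + p*(y*s)*y))
        = y * (Real.exp ((1-p)*y^2) * ∫ s in (0:ℝ)..1, Real.exp (-(y*s)^2 + p*(y*s)*y)) by ring,
      ← intervalIntegral.integral_const_mul]
    congr 1
    apply intervalIntegral.integral_congr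
    intro s _
    dsimp only
    rw [← Real.exp_add]
    congr 1
    ring

lemma Ffun_strictMono (K₀ p : ℝ) (hp : p ≤ 1) (hK₀ : 0 < K₀) :
    StrictMonoOn (fun y => Ffun K₀ p y) (Set.Ioi 0) := by
  intro y₁ hy₁ y₂ hy₂ h12
  simp only [Set.mem_Ioi] at hy₁ hy₂
  show Ffun K₀ p y₁ < Ffun K₀ p y₂
  rw [Ffun_eq K₀ p hy₁, Ffun_eq K₀ p hy₂]
  have hsq : y₁^2 < y₂^2 := by nlinarith
  have hcont : ∀ y : ℝ, Continuous fun s => Real.exp (y^2 * ((1-s)*(1+s-p))) := by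
    intro y; continuity
  have hint : ∀ y : ℝ, IntervalIntegrable (fun s => Real.exp (y^2 * ((1-s)*(1+s-p))))
      volume 0 1 := fun y => (hcont y).intervalIntegrable _ _
  have hI2pos : 0 < ∫ s in (0:ℝ)..1, Real.exp (y₂^2 * ((1-s)*(1+s-p))) :=
    intervalIntegral.intervalIntegral_pos_of_pos (hint y₂) (fun s => Real.exp_pos _)
      one_pos
  have hImono : (∫ s in (0:ℝ)..1, Real.exp (y₁^2 * ((1-s)*(1+s-p))))
      ≤ ∫ s in (0:ℝ)..1, Real.exp (y₂^2 * ((1-s)*(1+s-p))) := by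
    apply intervalIntegral.integral_mono_on zero_le_one (hint y₁) (hint y₂)
    intro s hs
    apply Real.exp_le_exp.2
    have h1 : 0 ≤ (1-s)*(1+s-p) := by
      rcases hs with ⟨hs0, hs1⟩
      apply mul_nonneg <;> nlinarith
    nlinarith
  have h1 : K₀ * Real.exp ((1-p)*y₁^2) ≤ K₀ * Real.exp ((1-p)*y₂^2) := by
    apply mul_le_mul_of_nonneg_left _ hK₀.le
    apply Real.exp_le_exp.2
    nlinarith
  have h2 : y₁ * (∫ s in (0:ℝ)..1, Real.exp (y₁^2 * ((1-s)*(1+s-p))))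
      < y₂ * ∫ s in (0:ℝ)..1, Real.exp (y₂^2 * ((1-s)*(1+s-p))) :=
    calc y₁ * (∫ s in (0:ℝ)..1, Real.exp (y₁^2 * ((1-s)*(1+s-p))))
        ≤ y₁ * ∫ s in (0:ℝ)..1, Real.exp (y₂^2 * ((1-s)*(1+s-p))) :=
          mul_le_mul_of_nonneg_left hImono hy₁.le
      _ < y₂ * ∫ s in (0:ℝ)..1, Real.exp (y₂^2 * ((1-s)*(1+s-p))) :=
          mul_lt_mul_of_pos_right h12 hI2pos
  linarith

lemma G₁_pos (K₀ p : ℝ) (hK₀ : 0 < K₀) {y : ℝ} (hy : 0 ≤ y) : 0 < G₁ K₀ p y := by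
  rw [G₁_eq]; exact div_pos one_pos (Ffun_pos K₀ p hK₀ hy)

lemma G₁_anti (K₀ p : ℝ) (hp : p ≤ 1) (hK₀ : 0 < K₀) :
    StrictAntiOn (fun y : ℝ => G₁ K₀ p y) (Set.Ioi 0) := by
  intro y₁ hy₁ y₂ hy₂ h12
  simp only [G₁_eq]
  apply one_div_lt_one_div_of_lt (Ffun_pos K₀ p hK₀ (le_of_lt hy₁))
  exact Ffun_strictMono K₀ p hp hK₀ hy₁ hy₂ h12

/-- For `p ≤ 1` and `K₀ > 0`, the function `y ↦ G₁(p,y)` is strictly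
decreasing on `(0, +∞)`. Consequently, for every `c > 0`, `y ↦ (1 − c·y²)·G₁(p,y)` is
strictly decreasing on `(0, 1/√c)` and negative on `(1/√c, +∞)`. -/
theorem stmt19 (p K₀ : ℝ) (hp : p ≤ 1) (hK₀ : 0 < K₀) :
    StrictAntiOn (fun y : ℝ => G₁ K₀ p y) (Set.Ioi 0) ∧
    ∀ c : ℝ, 0 < c →
      StrictAntiOn (fun y : ℝ => (1 - c * y^2) * G₁ K₀ p y)
        (Set.Ioo 0 (1 / Real.sqrt c)) ∧
      ∀ y : ℝ, 1 / Real.sqrt c < y → (1 - c * y^2) * G₁ K₀ p y < 0 := by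
  refine ⟨G₁_anti K₀ p hp hK₀, fun c hc => ?_⟩
  have hsc : 0 < Real.sqrt c := Real.sqrt_pos.2 hc
  have hcs : Real.sqrt c ^ 2 = c := Real.sq_sqrt hc.le
  constructor
  · intro y₁ hy₁ y₂ hy₂ h12
    obtain ⟨hy₁0, hy₁u⟩ := hy₁
    obtain ⟨hy₂0, hy₂u⟩ := hy₂
    have h₂ : c * y₂^2 < 1 := by
      have h1 : y₂ * Real.sqrt c < 1 := by
        rw [div_eq_mul_inv, one_mul] at hy₂u
        calc y₂ * Real.sqrt c < (Real.sqrt c)⁻¹ * Real.sqrt c :=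
            mul_lt_mul_of_pos_right hy₂u hsc
          _ = 1 := inv_mul_cancel₀ hsc.ne'
      nlinarith [mul_pos hy₂0 hsc]
    have h₁ : 1 - c * y₂^2 < 1 - c * y₁^2 := by
      nlinarith [mul_pos hc (mul_pos (sub_pos.2 h12) (show (0:ℝ) < y₁ + y₂ by linarith))]
    have hG : G₁ K₀ p y₂ < G₁ K₀ p y₁ := G₁_anti K₀ p hp hK₀ hy₁0 hy₂0 h12
    exact mul_lt_mul'' h₁ hG (by linarith) (G₁_pos K₀ p hK₀ hy₂0.le).le
  · intro y hy
    have hy0 : 0 < y := lt_trans (by positivity) hy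
    have h₂ : 1 < c * y^2 := by
      have h1 : 1 < y * Real.sqrt c := by
        rw [div_eq_mul_inv, one_mul] at hy
        calc (1:ℝ) = (Real.sqrt c)⁻¹ * Real.sqrt c := (inv_mul_cancel₀ hsc.ne').symm
          _ < y * Real.sqrt c := mul_lt_mul_of_pos_right hy hsc
      nlinarith
    exact mul_neg_of_neg_of_pos (by linarith) (G₁_pos K₀ p hK₀ hy0.le)
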